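/- Let n ≥ 1 and h > 0. Define the Beals kernel on (ℂⁿ)³ by K_h^{Beals}(X, Y, Z) = exp( −(1/h) Σ_j (Z_j − Y_j)(conj(Z_j) − conj(X_j)) − (1/(2h)) ‖X − Y‖² ). Then for all X, Y, Z ∈ ℂⁿ, ∫_{ℂⁿ} K_h^{Beals}(X, Y, Z + W) dγ_{h/2}(W) = 2^{−n} exp( (1/(2h))( Σ_j Z_j conj(X_j) + Σ_j X_j conj(Y_j) + Σ_j Y_j conj(Z_j) − Σ_j Z_j conj(Z_j) ) ) · exp( −(‖X‖² + ‖Y‖²)/(2h) ). -/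

import Mathlib

open MeasureTheory ProbabilityTheory Complex

/-- The Gaussian measure on `ℂ` whose real and imaginary parts are independent
real Gaussians of mean `0` and variance `t`. -/
noncomputable def gaussC (t : ℝ) : Measure ℂ :=
  ((gaussianReal 0 t.toNNReal).prod (gaussianReal 0 t.toNNReal)).map
    (fun p => (p.1 : ℂ) + (p.2 : ℂ) * Complex.I)

/-- The Gaussian measure `γ_t` on `ℂⁿ`. -/
noncomputable def gaussCn (n : ℕ) (t : ℝ) : Measure (Fin n → ℂ) :=
  Measure.pi fun _ => gaussC t

/-- The Beals kernel
`K_h^{Beals}(X,Y,Z) = exp( −(1/h) Σ_j (Z_j−Y_j)(conj Z_j − conj X_j) − (1/(2h)) ‖X−Y‖² )`,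
where `‖U‖² = Σ_j U_j conj U_j` is the Hermitian norm on `ℂⁿ`. -/
noncomputable def bealsKer (n : ℕ) (h : ℝ) (X Y Z : Fin n → ℂ) : ℂ :=
  Complex.exp (-(1 / (h : ℂ)) * ∑ j, (Z j - Y j) * ((starRingEnd ℂ) (Z j) - (starRingEnd ℂ) (X j))
    - (1 / (2 * (h : ℂ))) * ∑ j, (X j - Y j) * (starRingEnd ℂ) (X j - Y j))

/-!
The kernel factors over the coordinates of `W`, and in each coordinate it is
`exp (-|w|² / h + a w + b w̄)` times a constant. Against `γ_{h/2}` the factor `exp (-|w|² / h)`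
halves the variance in each of the two real directions, which costs `2^{-1/2}` each, and the
linear part integrates against the remaining Gaussian to `exp ((h/2) a b)`. Multiplying the
`n` coordinate factors gives `2^{-n}` and the stated exponent.
-/

open scoped NNReal Real ComplexConjugate

lemma integral_cexp_neg_sq_add_mul_gaussianReal {v : ℝ≥0} (hv : v ≠ 0) (c : ℂ) :
    ∫ x : ℝ, cexp (-x ^ 2 / (2 * v) + c * x) ∂gaussianReal 0 v
      = (√2 : ℂ)⁻¹ * cexp (v * c ^ 2 / 4) := by
  have hv' : (0 : ℝ) < v := NNReal.coe_pos.mpr (pos_iff_ne_zero.mpr hv)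
  have hsqrt : ((π * v : ℝ) : ℂ) ^ (1 / 2 : ℂ) = ((√(π * v) : ℝ) : ℂ) := by
    rw [Real.sqrt_eq_rpow, Complex.ofReal_cpow (by positivity)]
    norm_num
  calc ∫ x : ℝ, cexp (-x ^ 2 / (2 * v) + c * x) ∂gaussianReal 0 v
      = ∫ x : ℝ, ((√(2 * π * v) : ℝ) : ℂ)⁻¹ * cexp (-(1 / v) * x ^ 2 + c * x + 0) := by
        rw [integral_gaussianReal_eq_integral_smul hv]
        refine integral_congr_ae (Filter.Eventually.of_forall fun x => ?_)
        simp only [gaussianPDFReal, Complex.real_smul, sub_zero]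
        push_cast
        rw [mul_assoc, ← Complex.exp_add]
        congr 2
        field_simp
        ring
    _ = ((√(2 * π * v) : ℝ) : ℂ)⁻¹ * (√(π * v) : ℝ) * cexp (v * c ^ 2 / 4) := by
        have hscale : (π : ℂ) / -(-(1 / v)) = ((π * v : ℝ) : ℂ) := by push_cast; field_simp
        have hexp : (0 : ℂ) - c ^ 2 / (4 * -(1 / v)) = v * c ^ 2 / 4 := by field_simp; ring
        rw [integral_const_mul, integral_cexp_quadratic (by simpa using hv') c 0, hscale, hexp,
          hsqrt, ← mul_assoc]
    _ = (√2 : ℂ)⁻¹ * cexp (v * c ^ 2 / 4) := by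
        have hpos : √(π * v) ≠ 0 := by positivity
        rw [mul_assoc 2, Real.sqrt_mul zero_le_two, Complex.ofReal_mul, mul_inv,
          mul_assoc _ _ (√(π * v) : ℂ), inv_mul_cancel₀ (by exact_mod_cast hpos), mul_one]

instance isProbabilityMeasure_gaussC (t : ℝ) : IsProbabilityMeasure (gaussC t) :=
  Measure.isProbabilityMeasure_map (by fun_prop)

lemma integral_cexp_gaussC {t : ℝ} (ht : 0 < t) (a b : ℂ) :
    ∫ w, cexp (-(w * conj w) / (2 * t) + a * w + b * conj w) ∂gaussC t
      = 2⁻¹ * cexp (t * a * b) := by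
  have hv : t.toNNReal ≠ 0 := by simpa using ht
  have htc : ((t.toNNReal : ℝ) : ℂ) = t := by rw [Real.coe_toNNReal _ ht.le]
  have hsplit : ∀ x y : ℝ,
      cexp (-((x + y * I) * conj (x + y * I)) / (2 * t) + a * (x + y * I) + b * conj (x + y * I))
        = cexp (-x ^ 2 / (2 * t.toNNReal) + (a + b) * x)
          * cexp (-y ^ 2 / (2 * t.toNNReal) + ((a - b) * I) * y) := by
    intro x y
    rw [← Complex.exp_add, htc]
    congr 1
    simp only [map_add, map_mul, Complex.conj_ofReal, Complex.conj_I]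
    linear_combination ((y : ℂ) ^ 2 / (2 * t)) * Complex.I_sq
  rw [gaussC, integral_map (by fun_prop) (by fun_prop)]
  simp_rw [hsplit]
  rw [integral_prod_mul (fun x : ℝ => cexp (-x ^ 2 / (2 * t.toNNReal) + (a + b) * x))
      (fun y : ℝ => cexp (-y ^ 2 / (2 * t.toNNReal) + ((a - b) * I) * y)),
    integral_cexp_neg_sq_add_mul_gaussianReal hv, integral_cexp_neg_sq_add_mul_gaussianReal hv,
    mul_mul_mul_comm, ← Complex.exp_add, ← mul_inv, ← Complex.ofReal_mul,
    Real.mul_self_sqrt zero_le_two, htc]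
  congr 2
  linear_combination (t * (a - b) ^ 2 / 4) * Complex.I_sq

lemma integral_cexp_beals_factor_gaussC {h : ℝ} (hh : 0 < h) (x y z : ℂ) :
    ∫ w, cexp (-(1 / h) * ((z + w - y) * (conj (z + w) - conj x))) ∂gaussC (h / 2)
      = 2⁻¹ * cexp (-(1 / (2 * h)) * ((z - y) * (conj z - conj x))) := by
  have hexpand : ∀ w : ℂ, cexp (-(1 / h) * ((z + w - y) * (conj (z + w) - conj x)))
      = cexp (-(1 / h) * ((z - y) * (conj z - conj x)))
        * cexp (-(w * conj w) / (2 * (h / 2 : ℝ)) + (-(conj z - conj x) / h) * w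
          + (-(z - y) / h) * conj w) := by
    intro w
    rw [← Complex.exp_add, map_add]
    congr 1
    push_cast
    field_simp
    ring
  simp_rw [hexpand]
  rw [integral_const_mul, integral_cexp_gaussC (by positivity), mul_left_comm, ← Complex.exp_add]
  congr 2
  push_cast
  field_simp
  ring

lemma bealsKer_add_eq_mul_prod (n : ℕ) (h : ℝ) (X Y Z W : Fin n → ℂ) :
    bealsKer n h X Y (Z + W)
      = cexp (-(1 / (2 * h)) * ∑ j, (X j - Y j) * conj (X j - Y j))
        * ∏ j, cexp (-(1 / h) * ((Z j + W j - Y j) * (conj (Z j + W j) - conj (X j)))) := by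
  rw [bealsKer, ← Complex.exp_sum, ← Complex.exp_add, Finset.mul_sum, Finset.mul_sum,
    Finset.mul_sum, ← Finset.sum_sub_distrib, ← Finset.sum_add_distrib]
  refine congrArg cexp (Finset.sum_congr rfl fun j _ => ?_)
  simp only [Pi.add_apply]
  ring

theorem heat_on_beals_kernel_general
    (n : ℕ) (h : ℝ) (hh : 0 < h) (X Y Z : Fin n → ℂ) :
    ∫ W, bealsKer n h X Y (Z + W) ∂(gaussCn n (h / 2))
      = (2 : ℂ) ^ (-(n : ℤ)) *
          Complex.exp ((1 / (2 * (h : ℂ))) *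
            (∑ j, Z j * (starRingEnd ℂ) (X j) + ∑ j, X j * (starRingEnd ℂ) (Y j)
              + ∑ j, Y j * (starRingEnd ℂ) (Z j) - ∑ j, Z j * (starRingEnd ℂ) (Z j))) *
          Complex.exp (-((∑ j, X j * (starRingEnd ℂ) (X j))
              + ∑ j, Y j * (starRingEnd ℂ) (Y j)) / (2 * (h : ℂ))) := by
  simp_rw [bealsKer_add_eq_mul_prod]
  rw [integral_const_mul, gaussCn, integral_fintype_prod_eq_prod
      (fun j w => cexp (-(1 / h) * ((Z j + w - Y j) * (conj (Z j + w) - conj (X j)))))]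
  simp_rw [integral_cexp_beals_factor_gaussC hh]
  rw [Finset.prod_mul_distrib, Finset.prod_const, Finset.card_univ, Fintype.card_fin,
    ← Complex.exp_sum, zpow_neg, zpow_natCast, ← inv_pow, mul_left_comm, ← Complex.exp_add,
    mul_assoc, ← Complex.exp_add]
  congr 2
  simp only [Finset.mul_sum, ← Finset.sum_add_distrib, ← Finset.sum_sub_distrib, neg_div,
    Finset.sum_div, ← Finset.sum_neg_distrib]
  refine Finset.sum_congr rfl fun j _ => ?_
  simp only [map_sub]
  ring

/-- Action of the heat operator of variance `h/2` (in the `Z` variable)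
on the Beals kernel. -/
theorem heat_on_beals_kernel
    (n : ℕ) (hn : 1 ≤ n) (h : ℝ) (hh : 0 < h) (X Y Z : Fin n → ℂ) :
    ∫ W, bealsKer n h X Y (Z + W) ∂(gaussCn n (h / 2))
      = (2 : ℂ) ^ (-(n : ℤ)) *
          Complex.exp ((1 / (2 * (h : ℂ))) *
            (∑ j, Z j * (starRingEnd ℂ) (X j) + ∑ j, X j * (starRingEnd ℂ) (Y j)
              + ∑ j, Y j * (starRingEnd ℂ) (Z j) - ∑ j, Z j * (starRingEnd ℂ) (Z j))) *
          Complex.exp (-((∑ j, X j * (starRingEnd ℂ) (X j))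
              + ∑ j, Y j * (starRingEnd ℂ) (Y j)) / (2 * (h : ℂ))) :=
  heat_on_beals_kernel_general n h hh X Y Z
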